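/- If X is a spiny symmetric set of degree at most 2, then X is 2-coskeletal, i.e. the canonical map X → cosk₂ X is an isomorphism. -/

import Mathlib

open CategoryTheory Opposite

/-- The skeleton of the category of finite nonempty sets: objects are natural
numbers `n`, standing for `[n] = {0, …, n}`, morphisms are all functions. -/
def Ups : Type := ℕ

/-- The natural number underlying an object of `Ups`. -/
def Ups.toNat : Ups → ℕ := fun n => n

/-- The object `[n]` of `Ups`. -/
def Ups.of : ℕ → Ups := fun n => n

instance : Category Ups where
  Hom n m := Fin (n.toNat + 1) → Fin (m.toNat + 1)
  id _ := _root_.id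
  comp f g := g ∘ f

/-- A symmetric set is a presheaf on `Ups`. -/
abbrev SymmSet := Upsᵒᵖ ⥤ Type

/-- The map `ε_{ij} : [1] → [n]` sending `0, 1` to `i, j`. -/
def eps (n : ℕ) (i j : Fin (n + 1)) : Ups.of 1 ⟶ Ups.of n :=
  fun k => if k = 0 then i else j

/-- The set of `n`-simplices of a symmetric set. -/
abbrev simp (X : SymmSet) (n : ℕ) : Type := X.obj (op (Ups.of n))

/-- The Bousfield–Segal map `𝓑ₙ : Xₙ → X₁ⁿ`, `x ↦ (ε₀₁*x, …, ε₀ₙ*x)`. -/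
def BS (X : SymmSet) (n : ℕ) (x : simp X n) : Fin n → simp X 1 :=
  fun k => X.map (eps n 0 k.succ).op x

/-- The Segal map `𝓔ₙ : Xₙ → X₁ⁿ`, `x ↦ (ε₀₁*x, ε₁₂*x, …, ε₍ₙ₋₁₎ₙ*x)`. -/
def ES (X : SymmSet) (n : ℕ) (x : simp X n) : Fin n → simp X 1 :=
  fun k => X.map (eps n k.castSucc k.succ).op x

/-- The canonical map `μ_X` to matrices, `x ↦ (ε_{ij}* x)_{ij}`. -/
def muMat (X : SymmSet) (n : ℕ) (x : simp X n) :
    Fin (n + 1) → Fin (n + 1) → simp X 1 :=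
  fun i j => X.map (eps n i j).op x

/-- A symmetric set is spiny if all Bousfield–Segal maps are injective. -/
def Spiny (X : SymmSet) : Prop := ∀ n, Function.Injective (BS X n)
/-- The matrix symmetric set `Mat(S)`: `n`-simplices are functions `[n]×[n] → S`. -/
def MatS (S : Type) : SymmSet where
  obj k := Fin (k.unop.toNat + 1) → Fin (k.unop.toNat + 1) → S
  map f := TypeCat.ofHom (fun M => fun a b => M (f.unop a) (f.unop b))
  map_id := by intros; rfl
  map_comp := by intros; rfl

/-- An `n`-simplex is degenerate if it is `ρ* y` for a noninvertible surjection
`ρ : [n] ↠ [m]` and an `m`-simplex `y`. -/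
def Degen (X : SymmSet) (n : ℕ) (x : simp X n) : Prop :=
  ∃ (m : ℕ) (ρ : Ups.of n ⟶ Ups.of m), Function.Surjective ρ ∧
    ¬ Function.Bijective ρ ∧ ∃ y : simp X m, x = X.map ρ.op y

/-- The `d`-skeleton of a symmetric set, as a symmetric subset. -/
def skel (X : SymmSet) (d : ℕ) : SymmSet where
  obj k := {x : X.obj k // ∃ (i : ℕ) (_ : i ≤ d) (α : k.unop ⟶ Ups.of i)
      (y : simp X i), x = X.map α.op y}
  map f := TypeCat.ofHom (fun x => ⟨X.map f x.1, by
    obtain ⟨i, hi, α, y, hy⟩ := x.2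
    refine ⟨i, hi, f.unop ≫ α, y, ?_⟩
    rw [hy, ← FunctorToTypes.map_comp_apply]
    rfl⟩)
  map_id := by
    intro k; ext x
    simp
  map_comp := by
    intro k k' k'' f g; ext x
    simp

/-- A symmetric set is `d`-skeletal when all simplices above dimension `d`
are degenerate. -/
def SkeletalLE (X : SymmSet) (d : ℕ) : Prop :=
  ∀ n, d < n → ∀ x : simp X n, Degen X n x

/-- `X` has dimension `d` when `d` is the least integer such that `X` is
`d`-skeletal. -/
def HasDim (X : SymmSet) (d : ℕ) : Prop :=
  IsLeast {m | SkeletalLE X m} d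

/-- A symmetric set is reduced when it has exactly one `0`-simplex. -/
def Reduced (X : SymmSet) : Prop :=
  Nonempty (simp X 0) ∧ Subsingleton (simp X 0)

/-- A partial group is a reduced spiny symmetric set. -/
def IsPartialGroup (X : SymmSet) : Prop := Reduced X ∧ Spiny X

/-- A partial group is trivial when it has no nonidentity elements. -/
def TrivialPG (X : SymmSet) : Prop := Subsingleton (simp X 1)

/-- The order of a partial group: the number of its elements (edges). -/
noncomputable def orderPG (X : SymmSet) : ℕ := Nat.card (simp X 1)

/-- An edge is an identity if it is in the image of the degeneracy `X₀ → X₁`. -/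
def isIdent (X : SymmSet) (e : simp X 1) : Prop :=
  ∃ v : simp X 0, e = X.map (Quiver.Hom.op
    ((fun _ => 0 : Fin 2 → Fin 1) : Ups.of 1 ⟶ Ups.of 0)) v

/-- The source vertex of an edge. -/
def srcE (X : SymmSet) (e : simp X 1) : simp X 0 :=
  X.map (Quiver.Hom.op ((fun _ => 0 : Fin 1 → Fin 2) : Ups.of 0 ⟶ Ups.of 1)) e

/-- `X` has (higher Segal) degree at most `k`: for each starry word `w` of
length `n+1 ≥ k+1`, if the last `k+1` faces `d_{n+1-k} w, …, d_{n+1} w` of `w`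
are Bousfield–Segal images of simplices, then so is `w`. -/
def HasDegLE (X : SymmSet) (k : ℕ) : Prop :=
  ∀ n, k ≤ n → ∀ w : Fin (n + 1) → simp X 1,
    (∀ a b, srcE X (w a) = srcE X (w b)) →
    (∀ i : Fin (n + 1), n ≤ (i : ℕ) + k →
      (fun j : Fin n => w (i.succAbove j)) ∈ Set.range (BS X n)) →
    w ∈ Set.range (BS X (n + 1))

/-- `X` has degree `d`: `d` is the least `k ≥ 1` with `HasDegLE X k`. -/
def DegreeIs (X : SymmSet) (d : ℕ) : Prop :=
  IsLeast {k | 1 ≤ k ∧ HasDegLE X k} d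

/-- `W`, with structure maps `i, j`, is a coproduct of `Y` and `Z` in the
category of partial groups. -/
def IsPGCoproduct (W Y Z : SymmSet) (i : Y ⟶ W) (j : Z ⟶ W) : Prop :=
  ∀ V : SymmSet, IsPartialGroup V → ∀ (f : Y ⟶ V) (g : Z ⟶ V),
    ∃! h : W ⟶ V, i ≫ h = f ∧ j ≫ h = g

/-- The nerve of a group `G`, as a symmetric set: an `n`-simplex is a matrix
`(g_{ij})` of elements of `G` satisfying the cocycle condition. -/
def grpNerve (G : Type) [Group G] : SymmSet where
  obj k := {M : Fin (k.unop.toNat + 1) → Fin (k.unop.toNat + 1) → G //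
      ∀ i j l, M i j * M j l = M i l}
  map f := TypeCat.ofHom (fun M => ⟨fun a b => M.1 (f.unop a) (f.unop b),
    fun i j l => M.2 (f.unop i) (f.unop j) (f.unop l)⟩)
  map_id := by intro k; ext M; rfl
  map_comp := by intros; ext M; rfl

/-- The full subcategory `Υ_{≤ n}` of `Ups` on the objects `[0], …, [n]`. -/
abbrev UpsLE (n : ℕ) := CategoryTheory.ObjectProperty.FullSubcategory (fun k : Ups => k.toNat ≤ n)

/-- The inclusion `Υ_{≤ n} → Υ`. -/
abbrev upsIncl (n : ℕ) : UpsLE n ⥤ Ups := ObjectProperty.ι _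

/-- The `n`-coskeleton of a symmetric set: the right Kan extension of the
restriction of `X` to `Υ_{≤ n}` along the inclusion. -/
noncomputable def cosk (n : ℕ) (X : SymmSet) : SymmSet :=
  ((upsIncl n).op.ran).obj ((upsIncl n).op ⋙ X)

/-- The canonical (unit) map `X ⟶ cosk_n X`. -/
noncomputable def coskUnit (n : ℕ) (X : SymmSet) : X ⟶ cosk n X :=
  (((upsIncl n).op.ranAdjunction (Type)).unit).app X

/-!
Over a spiny `X`, a compatible family of `0`-, `1`- and `2`-simplices indexed by the maps into
`[n]` is determined by its spine `(ε₀ⱼ)ⱼ`: every edge `(a, b)` is a face of the triangle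
`(0, a, b)`, and a triangle is determined by its two edges at `0`. Hence `Xₙ → (cosk₂ X)ₙ` is
injective. For surjectivity, induct on `n`: the faces of the spine of a family over `[n + 1]` are
the spines of its restrictions to the facets `[n]`, which are amalgamated by induction, so they
lie in the image of `𝓑ₙ`; degree at most `2` puts the spine itself in the image of `𝓑ₙ₊₁`, and
a preimage amalgamates the family by the uniqueness statement.
-/

lemma eps_comp_succAbove (m : ℕ) (i : Fin (m + 1)) (j : Fin m) :
    eps m 0 j.succ ≫ (i.succ.succAbove : Ups.of m ⟶ Ups.of (m + 1)) =
      eps (m + 1) 0 (i.succAbove j).succ := by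
  funext a
  fin_cases a
  · exact Fin.succ_succAbove_zero i
  · exact Fin.succ_succAbove_succ i j

lemma eps_self_eq_comp (n : ℕ) (i : Fin (n + 1)) :
    eps n i i = ((fun _ => 0 : Fin 2 → Fin 1) : Ups.of 1 ⟶ Ups.of 0) ≫
      ((fun _ => i : Fin 1 → Fin (n + 1)) : Ups.of 0 ⟶ Ups.of n) :=
  funext fun _ => ite_self i

namespace SymmSet

/-- The compatible families are the `n`-simplices of `cosk_d X`, a limit indexed by the maps
`[k] → [n]` with `k ≤ d`. -/
abbrev TruncFamily (X : SymmSet) (d n : ℕ) : Type :=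
  ∀ k, k ≤ d → (Ups.of k ⟶ Ups.of n) → simp X k

variable {X : SymmSet} {d n : ℕ}

namespace TruncFamily

def IsCompatible (s : TruncFamily X d n) : Prop :=
  ∀ k hk k' hk' (β : Ups.of k' ⟶ Ups.of k) (α : Ups.of k ⟶ Ups.of n),
    X.map β.op (s k hk α) = s k' hk' (β ≫ α)

def IsAmalgamation (s : TruncFamily X d n) (x : simp X n) : Prop :=
  ∀ k hk (α : Ups.of k ⟶ Ups.of n), X.map α.op x = s k hk α

def restrict (s : TruncFamily X d n) {m : ℕ} (δ : Ups.of m ⟶ Ups.of n) : TruncFamily X d m :=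
  fun k hk α => s k hk (α ≫ δ)

def spine (s : TruncFamily X d n) (hd : 1 ≤ d) : Fin n → simp X 1 :=
  fun j => s 1 hd (eps n 0 j.succ)

lemma IsCompatible.restrict {s : TruncFamily X d n} (hs : s.IsCompatible) {m : ℕ}
    (δ : Ups.of m ⟶ Ups.of n) : (s.restrict δ).IsCompatible := fun k hk k' hk' β α => by
  change X.map β.op (s k hk (α ≫ δ)) = s k' hk' ((β ≫ α) ≫ δ)
  rw [hs, Category.assoc]

lemma IsCompatible.eq_comp_of_eq {s t : TruncFamily X d n} (hs : s.IsCompatible)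
    (ht : t.IsCompatible) {k k' : ℕ} (hk : k ≤ d) (hk' : k' ≤ d) {α : Ups.of k ⟶ Ups.of n}
    (h : s k hk α = t k hk α) (β : Ups.of k' ⟶ Ups.of k) :
    s k' hk' (β ≫ α) = t k' hk' (β ≫ α) := by
  rw [← hs k hk, ← ht k hk, h]

lemma IsCompatible.isAmalgamation_self {s : TruncFamily X d n} (hs : s.IsCompatible)
    (hn : n ≤ d) : s.IsAmalgamation (s n hn (𝟙 _)) := fun k hk α => by
  rw [hs, Category.comp_id]

lemma isCompatible_map (x : simp X n) :
    IsCompatible (fun k (_ : k ≤ d) (α : Ups.of k ⟶ Ups.of n) => X.map α.op x) :=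
  fun _ _ _ _ β α => (X.map_comp_apply α.op β.op x).symm

lemma IsAmalgamation.bs_eq_spine {s : TruncFamily X d n} {x : simp X n}
    (hx : s.IsAmalgamation x) (hd : 1 ≤ d) : BS X n x = s.spine hd :=
  funext fun _ => hx 1 hd _

lemma spine_restrict_succAbove {m : ℕ} (s : TruncFamily X d (m + 1)) (hd : 1 ≤ d)
    (i : Fin (m + 1)) :
    (s.restrict (i.succ.succAbove : Ups.of m ⟶ Ups.of (m + 1))).spine hd =
      fun j => s.spine hd (i.succAbove j) :=
  funext fun j => congrArg (s 1 hd) (eps_comp_succAbove m i j)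

end TruncFamily

theorem isIso_coskUnit_of_existsUnique_isAmalgamation (d : ℕ) (X : SymmSet)
    (h : ∀ n (s : TruncFamily X d n), s.IsCompatible → ∃! x, s.IsAmalgamation x) :
    IsIso (coskUnit d X) := by
  have hkan : (Functor.RightExtension.mk X
      (𝟙 ((upsIncl d).op ⋙ X))).IsPointwiseRightKanExtension := by
    intro Y
    apply Nonempty.some
    change Nonempty (Limits.IsLimit _)
    rw [Limits.Types.isLimit_iff]
    intro sec hsec
    let arrow (k : ℕ) (hk : k ≤ d) (α : Ups.of k ⟶ Y.unop) :
        StructuredArrow Y (upsIncl d).op :=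
      StructuredArrow.mk (Y := op (⟨Ups.of k, hk⟩ : UpsLE d)) α.op
    obtain ⟨x, hx, huniq⟩ := h (Ups.toNat Y.unop) (fun k hk α => sec (arrow k hk α))
      fun k hk k' hk' β α => by
        exact hsec (StructuredArrow.homMk
          (ObjectProperty.homMk β : (⟨Ups.of k', hk'⟩ : UpsLE d) ⟶ ⟨Ups.of k, hk⟩).op rfl :
          arrow k hk α ⟶ arrow k' hk' (β ≫ α))
    exact ⟨x, fun g => hx _ g.right.unop.property g.hom.unop,
      fun y hy => huniq y fun k hk α => hy (arrow k hk α)⟩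
  change IsIso (((upsIncl d).op.ranAdjunction Type).unit.app X)
  rw [Functor.isIso_ranAdjunction_unit_app_iff]
  exact hkan.isRightKanExtension

end SymmSet

open SymmSet TruncFamily

namespace Spiny

variable {X : SymmSet} {n : ℕ}

lemma subsingleton_zero (hX : Spiny X) : Subsingleton (simp X 0) :=
  ⟨fun _ _ => hX 0 (funext fun j => j.elim0)⟩

lemma ext_two (hX : Spiny X) {z z' : simp X 2}
    (h₁ : X.map (eps 2 0 1).op z = X.map (eps 2 0 1).op z')
    (h₂ : X.map (eps 2 0 2).op z = X.map (eps 2 0 2).op z') : z = z' :=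
  hX 2 (funext fun t => by fin_cases t; exacts [h₁, h₂])

lemma eq_of_isAmalgamation (hX : Spiny X) {d : ℕ} (hd : 1 ≤ d) {s : TruncFamily X d n}
    {x y : simp X n} (hx : s.IsAmalgamation x) (hy : s.IsAmalgamation y) : x = y :=
  hX n ((hx.bs_eq_spine hd).trans (hy.bs_eq_spine hd).symm)

theorem truncFamily_ext (hX : Spiny X) {s t : TruncFamily X 2 n} (hs : s.IsCompatible)
    (ht : t.IsCompatible) (h : s.spine one_le_two = t.spine one_le_two) : s = t := by
  have hvertices : ∀ v, s 0 (Nat.zero_le 2) v = t 0 (Nat.zero_le 2) v :=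
    fun _ => hX.subsingleton_zero.elim _ _
  have hrays : ∀ j, s 1 one_le_two (eps n 0 j) = t 1 one_le_two (eps n 0 j) := by
    intro j
    rcases Fin.eq_zero_or_eq_succ j with rfl | ⟨j, rfl⟩
    · rw [eps_self_eq_comp]
      exact hs.eq_comp_of_eq ht _ _ (hvertices _) _
    · exact congrFun h j
  have htriangles : ∀ γ : Ups.of 2 ⟶ Ups.of n,
      s 1 one_le_two (eps 2 0 1 ≫ γ) = t 1 one_le_two (eps 2 0 1 ≫ γ) →
      s 1 one_le_two (eps 2 0 2 ≫ γ) = t 1 one_le_two (eps 2 0 2 ≫ γ) →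
      s 2 le_rfl γ = t 2 le_rfl γ :=
    fun γ h₁ h₂ => hX.ext_two
      (by rw [hs 2 le_rfl 1 one_le_two, ht 2 le_rfl 1 one_le_two, h₁])
      (by rw [hs 2 le_rfl 1 one_le_two, ht 2 le_rfl 1 one_le_two, h₂])
  have hedges : ∀ α, s 1 one_le_two α = t 1 one_le_two α := by
    intro α
    -- `α` is the face `d₀` of the triangle `(0, α 0, α 1)`, whose other edges are rays.
    let β : Ups.of 2 ⟶ Ups.of n := ![0, α 0, α 1]
    have h₀₁ : eps 2 0 1 ≫ β = eps n 0 (α 0) := by funext a; fin_cases a <;> rfl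
    have h₀₂ : eps 2 0 2 ≫ β = eps n 0 (α 1) := by funext a; fin_cases a <;> rfl
    have h₁₂ : eps 2 1 2 ≫ β = α := by funext a; fin_cases a <;> rfl
    have hβ := htriangles β (h₀₁ ▸ hrays (α 0)) (h₀₂ ▸ hrays (α 1))
    rw [← h₁₂]
    exact hs.eq_comp_of_eq ht _ _ hβ _
  funext k hk α
  interval_cases k
  exacts [hvertices α, hedges α, htriangles α (hedges _) (hedges _)]

lemma isAmalgamation_of_bs_eq_spine (hX : Spiny X) {s : TruncFamily X 2 n}
    (hs : s.IsCompatible) {x : simp X n} (hx : BS X n x = s.spine one_le_two) :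
    s.IsAmalgamation x := by
  have := hX.truncFamily_ext (isCompatible_map x) hs hx
  exact fun k hk α => congrFun (congrFun (congrFun this k) hk) α

theorem exists_isAmalgamation (hX : Spiny X) (hdeg : HasDegLE X 2) :
    ∀ n (s : TruncFamily X 2 n), s.IsCompatible → ∃ x, s.IsAmalgamation x
  | 0, _, hs | 1, _, hs | 2, _, hs => ⟨_, hs.isAmalgamation_self (by norm_num)⟩
  | m + 3, s, hs => by
    have hfaces : ∀ i : Fin (m + 3),
        (fun j => s.spine one_le_two (i.succAbove j)) ∈ Set.range (BS X (m + 2)) := by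
      intro i
      obtain ⟨y, hy⟩ := exists_isAmalgamation hX hdeg (m + 2) _ (hs.restrict i.succ.succAbove)
      exact ⟨y, (hy.bs_eq_spine one_le_two).trans (spine_restrict_succAbove s one_le_two i)⟩
    obtain ⟨x, hx⟩ := hdeg (m + 2) le_add_self _ (fun _ _ => hX.subsingleton_zero.elim _ _)
      fun i _ => hfaces i
    exact ⟨x, hX.isAmalgamation_of_bs_eq_spine hs hx⟩

end Spiny

/-- A spiny symmetric set of degree at most 2 is 2-coskeletal: the canonical
map `X ⟶ cosk₂ X` is an isomorphism. -/
theorem twoCoskeletal_of_degree_le_two (X : SymmSet) (hX : Spiny X)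
    (hdeg : HasDegLE X 2) : IsIso (coskUnit 2 X) :=
  isIso_coskUnit_of_existsUnique_isAmalgamation 2 X fun n s hs =>
    let ⟨x, hx⟩ := hX.exists_isAmalgamation hdeg n s hs
    ⟨x, hx, fun _ hy => hX.eq_of_isAmalgamation one_le_two hy hx⟩
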